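/- arXiv:1111.0330 — 2 statements merged into one kernel-verified Lean document; each statement's English description precedes it below -/
import Mathlib

section
/- Consider a commutative diagram of S-semimodules with rows L₁ →f₁ M₁ →g₁ N₁ and L₂ →f₂ M₂ →g₂ N₂ and vertical maps α₁ (surjective), α₂ (injective), α₃ (injective). If the second row is exact, then the first row is exact. -/
/-- `γ` is `k`-uniform. -/
def KUniform {S X Y : Type*} [Semiring S] [AddCommMonoid X] [Module S X]
    [AddCommMonoid Y] [Module S Y] (γ : X →ₗ[S] Y) : Prop :=
  ∀ x₁ x₂ : X, γ x₁ = γ x₂ →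
    ∃ k₁ k₂ : X, γ k₁ = 0 ∧ γ k₂ = 0 ∧ x₁ + k₁ = x₂ + k₂

/-- Exactness of `A →f B →g C`: `f(A) = Ker(g)` and `g` is `k`-uniform. -/
def IsExactSeq {S A B C : Type*} [Semiring S] [AddCommMonoid A] [Module S A]
    [AddCommMonoid B] [Module S B] [AddCommMonoid C] [Module S C]
    (f : A →ₗ[S] B) (g : B →ₗ[S] C) : Prop :=
  Set.range ⇑f = {b : B | g b = 0} ∧ KUniform g

/-!
Through the injective map `α₂`, the first row sits inside the second: surjectivity of `α₁`
gives `α₂ (f₁ L₁) = f₂ L₂`, and injectivity of `α₃` gives `Ker g₁ = α₂⁻¹ (Ker g₂)`.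
Pulling `f₂ L₂ = Ker g₂` back along `α₂` yields `f₁ L₁ = Ker g₁`; pulling back the
witnesses of `k`-uniformity of `g₂`, which lie in `Ker g₂ ⊆ α₂ (M₁)`, yields that of `g₁`.
-/

section Ladder

variable {S L₁ M₁ N₁ L₂ M₂ N₂ : Type*} [Semiring S]
  [AddCommMonoid L₁] [Module S L₁] [AddCommMonoid M₁] [Module S M₁]
  [AddCommMonoid N₁] [Module S N₁] [AddCommMonoid L₂] [Module S L₂]
  [AddCommMonoid M₂] [Module S M₂] [AddCommMonoid N₂] [Module S N₂]

theorem image_range_eq_range_of_comp_eq {f₁ : L₁ →ₗ[S] M₁} {f₂ : L₂ →ₗ[S] M₂}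
    {α₁ : L₁ →ₗ[S] L₂} {α₂ : M₁ →ₗ[S] M₂} (hc : α₂.comp f₁ = f₂.comp α₁)
    (hα₁ : Function.Surjective α₁) :
    α₂ '' Set.range f₁ = Set.range f₂ := by
  rw [← Set.range_comp, ← LinearMap.coe_comp, hc, LinearMap.coe_comp, hα₁.range_comp]

theorem setOf_map_eq_zero_eq_preimage_of_comp_eq {g₁ : M₁ →ₗ[S] N₁} {g₂ : M₂ →ₗ[S] N₂}
    {α₂ : M₁ →ₗ[S] M₂} {α₃ : N₁ →ₗ[S] N₂} (hc : α₃.comp g₁ = g₂.comp α₂)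
    (hα₃ : Function.Injective α₃) :
    {b | g₁ b = 0} = α₂ ⁻¹' {b | g₂ b = 0} := by
  ext b
  simp only [Set.mem_ofPred_eq, Set.mem_preimage, ← map_eq_zero_iff α₃ hα₃,
    ← LinearMap.comp_apply, hc]

theorem KUniform.of_comp_eq {g₁ : M₁ →ₗ[S] N₁} {g₂ : M₂ →ₗ[S] N₂}
    {α₂ : M₁ →ₗ[S] M₂} {α₃ : N₁ →ₗ[S] N₂} (h : KUniform g₂)
    (hc : α₃.comp g₁ = g₂.comp α₂) (hα₂ : Function.Injective α₂)
    (hα₃ : Function.Injective α₃) (hker : {b | g₂ b = 0} ⊆ Set.range α₂) :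
    KUniform g₁ := by
  have hker₁ := setOf_map_eq_zero_eq_preimage_of_comp_eq hc hα₃
  intro x₁ x₂ hx
  have hx₂ : g₂ (α₂ x₁) = g₂ (α₂ x₂) :=
    calc g₂ (α₂ x₁) = α₃ (g₁ x₁) := (LinearMap.congr_fun hc x₁).symm
      _ = α₃ (g₁ x₂) := by rw [hx]
      _ = g₂ (α₂ x₂) := LinearMap.congr_fun hc x₂
  obtain ⟨k₁, k₂, hk₁, hk₂, hsum⟩ := h _ _ hx₂
  obtain ⟨m₁, rfl⟩ := hker hk₁
  obtain ⟨m₂, rfl⟩ := hker hk₂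
  exact ⟨m₁, m₂, hker₁.superset hk₁, hker₁.superset hk₂, hα₂ (by rwa [map_add, map_add])⟩

end Ladder

/-- in a commutative ladder with `α₁` surjective and `α₂, α₃`
injective, exactness of the second row implies exactness of the first row. -/
theorem exact_ascends {S L₁ M₁ N₁ L₂ M₂ N₂ : Type*} [Semiring S]
    [AddCommMonoid L₁] [Module S L₁] [AddCommMonoid M₁] [Module S M₁]
    [AddCommMonoid N₁] [Module S N₁] [AddCommMonoid L₂] [Module S L₂]
    [AddCommMonoid M₂] [Module S M₂] [AddCommMonoid N₂] [Module S N₂]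
    (f₁ : L₁ →ₗ[S] M₁) (g₁ : M₁ →ₗ[S] N₁) (f₂ : L₂ →ₗ[S] M₂) (g₂ : M₂ →ₗ[S] N₂)
    (α₁ : L₁ →ₗ[S] L₂) (α₂ : M₁ →ₗ[S] M₂) (α₃ : N₁ →ₗ[S] N₂)
    (hc₁ : α₂.comp f₁ = f₂.comp α₁) (hc₂ : α₃.comp g₁ = g₂.comp α₂)
    (hα₁ : Function.Surjective ⇑α₁) (hα₂ : Function.Injective ⇑α₂)
    (hα₃ : Function.Injective ⇑α₃) (hrow₂ : IsExactSeq f₂ g₂) :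
    IsExactSeq f₁ g₁ := by
  obtain ⟨hrange₂, hku₂⟩ := hrow₂
  have himage := image_range_eq_range_of_comp_eq hc₁ hα₁
  refine ⟨?_, hku₂.of_comp_eq hc₂ hα₂ hα₃ ?_⟩
  · rw [setOf_map_eq_zero_eq_preimage_of_comp_eq hc₂ hα₃, ← hrange₂, ← himage,
      hα₂.preimage_image]
  · rw [← hrange₂, ← himage]
    exact Set.image_subset_range _ _
end

section
/- (Short Five Lemma, surjectivity part) Given a commutative diagram of S-semimodules with exact rows L₁ →f₁ M₁ →g₁ N₁ → 0 and 0 → L₂ →f₂ M₂ →g₂ N₂, if α₁ and α₃ are surjective and α₂ is i-uniform, then α₂ is surjective. Without the i-uniform hypothesis, one still obtains that the subtractive closure of α₂(M₁) equals M₂. -/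
/-- `γ` is `i`-uniform: its image equals its subtractive closure. -/
def IUniform {S X Y : Type*} [Semiring S] [AddCommMonoid X] [Module S X]
    [AddCommMonoid Y] [Module S Y] (γ : X →ₗ[S] Y) : Prop :=
  Set.range ⇑γ = {y : Y | ∃ x₁ x₂ : X, y + γ x₁ = γ x₂}

/-!
Chase `m₂ ∈ M₂` through the diagram: lift `g₂ m₂` along `α₃` and `g₁` to some `m₁ ∈ M₁`, so that
`g₂ m₂ = g₂ (α₂ m₁)`. Exactness of the bottom row turns this into `m₂ + f₂ l = α₂ m₁ + f₂ l'`, and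
since `α₁` is surjective both `f₂ l` and `f₂ l'` lie in the image of `α₂`. Hence `m₂` lies in the
subtractive closure of `α₂(M₁)`, which for an `i`-uniform `α₂` is its image.
-/

section

variable {S A B C : Type*} [Semiring S] [AddCommMonoid A] [Module S A]
  [AddCommMonoid B] [Module S B] [AddCommMonoid C] [Module S C]

theorem IsExactSeq.exists_add_eq_add_of_map_eq {f : A →ₗ[S] B} {g : B →ₗ[S] C}
    (h : IsExactSeq f g) {b b' : B} (hb : g b = g b') :
    ∃ a a' : A, b + f a = b' + f a' := by
  obtain ⟨k, k', hk, hk', hkk'⟩ := h.2 b b' hb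
  obtain ⟨a, rfl⟩ : k ∈ Set.range f := h.1 ▸ hk
  obtain ⟨a', rfl⟩ : k' ∈ Set.range f := h.1 ▸ hk'
  exact ⟨a, a', hkk'⟩

theorem IUniform.mem_range {γ : B →ₗ[S] C} (h : IUniform γ) {c : C}
    (hc : ∃ b b' : B, c + γ b = γ b') : c ∈ Set.range γ :=
  h ▸ hc

end

section

variable {S L₁ M₁ N₁ L₂ M₂ N₂ : Type*} [Semiring S]
  [AddCommMonoid L₁] [Module S L₁] [AddCommMonoid M₁] [Module S M₁]
  [AddCommMonoid N₁] [Module S N₁] [AddCommMonoid L₂] [Module S L₂]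
  [AddCommMonoid M₂] [Module S M₂] [AddCommMonoid N₂] [Module S N₂]

theorem range_subset_range_of_comp_eq {f₁ : L₁ →ₗ[S] M₁} {f₂ : L₂ →ₗ[S] M₂}
    {α₁ : L₁ →ₗ[S] L₂} {α₂ : M₁ →ₗ[S] M₂} (hc : α₂.comp f₁ = f₂.comp α₁)
    (hα₁ : Function.Surjective α₁) : Set.range f₂ ⊆ Set.range α₂ := by
  rintro _ ⟨l, rfl⟩
  obtain ⟨l₁, rfl⟩ := hα₁ l
  exact ⟨f₁ l₁, LinearMap.congr_fun hc l₁⟩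

theorem exists_map_eq_map_of_comp_eq {g₁ : M₁ →ₗ[S] N₁} {g₂ : M₂ →ₗ[S] N₂}
    {α₂ : M₁ →ₗ[S] M₂} {α₃ : N₁ →ₗ[S] N₂} (hc : α₃.comp g₁ = g₂.comp α₂)
    (hg₁ : Function.Surjective g₁) (hα₃ : Function.Surjective α₃) (m₂ : M₂) :
    ∃ m₁ : M₁, g₂ m₂ = g₂ (α₂ m₁) := by
  obtain ⟨n₁, hn₁⟩ := hα₃ (g₂ m₂)
  obtain ⟨m₁, rfl⟩ := hg₁ n₁
  exact ⟨m₁, hn₁.symm.trans (LinearMap.congr_fun hc m₁)⟩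

end

theorem short_five_surjective_general {S L₁ M₁ N₁ L₂ M₂ N₂ : Type*} [Semiring S]
    [AddCommMonoid L₁] [Module S L₁] [AddCommMonoid M₁] [Module S M₁]
    [AddCommMonoid N₁] [Module S N₁] [AddCommMonoid L₂] [Module S L₂]
    [AddCommMonoid M₂] [Module S M₂] [AddCommMonoid N₂] [Module S N₂]
    (f₁ : L₁ →ₗ[S] M₁) (g₁ : M₁ →ₗ[S] N₁) (f₂ : L₂ →ₗ[S] M₂) (g₂ : M₂ →ₗ[S] N₂)
    (α₁ : L₁ →ₗ[S] L₂) (α₂ : M₁ →ₗ[S] M₂) (α₃ : N₁ →ₗ[S] N₂)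
    (hc₁ : α₂.comp f₁ = f₂.comp α₁) (hc₂ : α₃.comp g₁ = g₂.comp α₂)
    (hg₁ : Function.Surjective ⇑g₁)
    (hrow₂ : IsExactSeq f₂ g₂)
    (hα₁ : Function.Surjective ⇑α₁) (hα₃ : Function.Surjective ⇑α₃) :
    (∀ m₂ : M₂, ∃ x x' : M₁, m₂ + α₂ x = α₂ x') ∧
      (IUniform α₂ → Function.Surjective ⇑α₂) := by
  have closure_eq_univ : ∀ m₂ : M₂, ∃ x x' : M₁, m₂ + α₂ x = α₂ x' := by
    intro m₂
    obtain ⟨m₁, hm₁⟩ := exists_map_eq_map_of_comp_eq hc₂ hg₁ hα₃ m₂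
    obtain ⟨l, l', hll'⟩ := hrow₂.exists_add_eq_add_of_map_eq hm₁
    have hsub := range_subset_range_of_comp_eq hc₁ hα₁
    obtain ⟨x, hx⟩ := hsub ⟨l, rfl⟩
    obtain ⟨y, hy⟩ := hsub ⟨l', rfl⟩
    exact ⟨x, m₁ + y, by rw [hx, hll', map_add, hy]⟩
  exact ⟨closure_eq_univ, fun hiu m₂ => hiu.mem_range (closure_eq_univ m₂)⟩

/-- Short Five Lemma, surjectivity part: for a commutative ladder
with exact rows `L₁ → M₁ → N₁ → 0` and `0 → L₂ → M₂ → N₂`, if `α₁` and `α₃` are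
surjective, then the subtractive closure of `α₂(M₁)` is all of `M₂`; if moreover
`α₂` is `i`-uniform then `α₂` is surjective. -/
theorem short_five_surjective {S L₁ M₁ N₁ L₂ M₂ N₂ : Type*} [Semiring S]
    [AddCommMonoid L₁] [Module S L₁] [AddCommMonoid M₁] [Module S M₁]
    [AddCommMonoid N₁] [Module S N₁] [AddCommMonoid L₂] [Module S L₂]
    [AddCommMonoid M₂] [Module S M₂] [AddCommMonoid N₂] [Module S N₂]
    (f₁ : L₁ →ₗ[S] M₁) (g₁ : M₁ →ₗ[S] N₁) (f₂ : L₂ →ₗ[S] M₂) (g₂ : M₂ →ₗ[S] N₂)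
    (α₁ : L₁ →ₗ[S] L₂) (α₂ : M₁ →ₗ[S] M₂) (α₃ : N₁ →ₗ[S] N₂)
    (hc₁ : α₂.comp f₁ = f₂.comp α₁) (hc₂ : α₃.comp g₁ = g₂.comp α₂)
    (hrow₁ : IsExactSeq f₁ g₁) (hg₁ : Function.Surjective ⇑g₁)
    (hrow₂ : IsExactSeq f₂ g₂) (hf₂ : Function.Injective ⇑f₂)
    (hα₁ : Function.Surjective ⇑α₁) (hα₃ : Function.Surjective ⇑α₃) :
    (∀ m₂ : M₂, ∃ x x' : M₁, m₂ + α₂ x = α₂ x') ∧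
      (IUniform α₂ → Function.Surjective ⇑α₂) :=
  short_five_surjective_general f₁ g₁ f₂ g₂ α₁ α₂ α₃ hc₁ hc₂ hg₁ hrow₂ hα₁ hα₃
end
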